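/- Let m ≥ 1 be an integer and λ ∈ ℂ. Then for all 1 ≤ j, l ≤ m and every smooth f : ℂ^m → ℂ, the commutator identity B_l(A_j f) − A_j(B_l f) = −2λ δ_{lj} f holds (δ_{lj} the Kronecker delta). Moreover, if f is smooth with B_l f = 0 for every l (f is a holomorphic section in this trivialisation) and G = (G_{jk}) is a symmetric m×m complex matrix, then B_l( Σ_{j,k=1}^{m} G_{jk} A_j A_k f ) = −4λ Σ_{k=1}^{m} G_{lk} A_k f for every l. (This is the key computation showing that the genus-one complexified Hitchin connection preserves holomorphicity.) -/

import Mathlib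

open Complex

noncomputable section

/-- Wirtinger derivative `∂/∂z_j` of `f : ℂ^m → ℂ` at `z`, via the real Fréchet derivative. -/
def wder {m : ℕ} (j : Fin m) (f : (Fin m → ℂ) → ℂ) (z : Fin m → ℂ) : ℂ :=
  (1/2) * (fderiv ℝ f z (Pi.single j 1) - Complex.I * fderiv ℝ f z (Pi.single j Complex.I))

/-- Conjugate Wirtinger derivative `∂/∂z̄_j` of `f : ℂ^m → ℂ` at `z`. -/
def wderBar {m : ℕ} (j : Fin m) (f : (Fin m → ℂ) → ℂ) (z : Fin m → ℂ) : ℂ :=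
  (1/2) * (fderiv ℝ f z (Pi.single j 1) + Complex.I * fderiv ℝ f z (Pi.single j Complex.I))

/-- The first-order operator `A_j f = ∂_{z_j} f − λ z̄_j f`. -/
def Aop {m : ℕ} (lam : ℂ) (j : Fin m) (f : (Fin m → ℂ) → ℂ) : (Fin m → ℂ) → ℂ :=
  fun z => wder j f z - lam * (starRingEnd ℂ) (z j) * f z

/-- The first-order operator `B_l f = ∂_{z̄_l} f + λ z_l f`. -/
def Bop {m : ℕ} (lam : ℂ) (l : Fin m) (f : (Fin m → ℂ) → ℂ) : (Fin m → ℂ) → ℂ :=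
  fun z => wderBar l f z + lam * z l * f z

namespace WH
variable {m : ℕ}

lemma contDiff_Dv {f : (Fin m → ℂ) → ℂ} (hf : ContDiff ℝ (⊤ : ℕ∞) f) (v : Fin m → ℂ) :
    ContDiff ℝ (⊤ : ℕ∞) (fun z => fderiv ℝ f z v) :=
  (ContinuousLinearMap.apply ℝ ℂ v).contDiff.comp (hf.fderiv_right (by simp))

lemma second_symm {f : (Fin m → ℂ) → ℂ} (hf : ContDiff ℝ (⊤ : ℕ∞) f) (z v w : Fin m → ℂ) :
    fderiv ℝ (fun y => fderiv ℝ f y v) z w = fderiv ℝ (fun y => fderiv ℝ f y w) z v := by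
  have hd : Differentiable ℝ (fderiv ℝ f) := (hf.fderiv_right (m := (⊤ : ℕ∞)) (by simp)).differentiable (by simp)
  have key : ∀ u : Fin m → ℂ, fderiv ℝ (fun y => fderiv ℝ f y u) z
      = (ContinuousLinearMap.apply ℝ ℂ u).comp (fderiv ℝ (fderiv ℝ f) z) := by
    intro u
    exact ((ContinuousLinearMap.apply ℝ ℂ u).hasFDerivAt.comp z (hd z).hasFDerivAt).fderiv
  have h2 := second_derivative_symmetric (f' := fderiv ℝ f)
    (fun y => ((hf.differentiable (by simp)) y).hasFDerivAt) (hd z).hasFDerivAt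
  rw [key v, key w]
  simpa using h2 w v

lemma fderiv_wder {f : (Fin m → ℂ) → ℂ} (hf : ContDiff ℝ (⊤ : ℕ∞) f) (j : Fin m) (z w : Fin m → ℂ) :
    fderiv ℝ (wder j f) z w
      = (1/2) * (fderiv ℝ (fun y => fderiv ℝ f y (Pi.single j 1)) z w
          - Complex.I * fderiv ℝ (fun y => fderiv ℝ f y (Pi.single j Complex.I)) z w) := by
  have h1 := ((contDiff_Dv hf (Pi.single j 1)).differentiable (by simp)) z
  have h2 := ((contDiff_Dv hf (Pi.single j Complex.I)).differentiable (by simp)) z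
  show fderiv ℝ (fun y => (1/2 : ℂ) * (fderiv ℝ f y (Pi.single j 1)
      - Complex.I * fderiv ℝ f y (Pi.single j Complex.I))) z w = _
  rw [fderiv_const_mul (h1.fun_sub (h2.const_mul Complex.I)),
      fderiv_fun_sub h1 (h2.const_mul Complex.I), fderiv_const_mul h2]
  simp

lemma fderiv_wderBar {f : (Fin m → ℂ) → ℂ} (hf : ContDiff ℝ (⊤ : ℕ∞) f) (j : Fin m) (z w : Fin m → ℂ) :
    fderiv ℝ (wderBar j f) z w
      = (1/2) * (fderiv ℝ (fun y => fderiv ℝ f y (Pi.single j 1)) z w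
          + Complex.I * fderiv ℝ (fun y => fderiv ℝ f y (Pi.single j Complex.I)) z w) := by
  have h1 := ((contDiff_Dv hf (Pi.single j 1)).differentiable (by simp)) z
  have h2 := ((contDiff_Dv hf (Pi.single j Complex.I)).differentiable (by simp)) z
  show fderiv ℝ (fun y => (1/2 : ℂ) * (fderiv ℝ f y (Pi.single j 1)
      + Complex.I * fderiv ℝ f y (Pi.single j Complex.I))) z w = _
  rw [fderiv_const_mul (h1.fun_add (h2.const_mul Complex.I)),
      fderiv_fun_add h1 (h2.const_mul Complex.I), fderiv_const_mul h2]
  simp; ring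

lemma swap_comm {f : (Fin m → ℂ) → ℂ} (hf : ContDiff ℝ (⊤ : ℕ∞) f) (j l : Fin m) (z : Fin m → ℂ) :
    wderBar l (wder j f) z = wder j (wderBar l f) z := by
  have e1 := second_symm hf z (Pi.single j 1) (Pi.single l 1)
  have e2 := second_symm hf z (Pi.single j Complex.I) (Pi.single l 1)
  have e3 := second_symm hf z (Pi.single j 1) (Pi.single l Complex.I)
  have e4 := second_symm hf z (Pi.single j Complex.I) (Pi.single l Complex.I)
  show (1/2 : ℂ) * (fderiv ℝ (wder j f) z (Pi.single l 1)
      + Complex.I * fderiv ℝ (wder j f) z (Pi.single l Complex.I))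
    = (1/2 : ℂ) * (fderiv ℝ (wderBar l f) z (Pi.single j 1)
      - Complex.I * fderiv ℝ (wderBar l f) z (Pi.single j Complex.I))
  rw [fderiv_wder hf, fderiv_wder hf, fderiv_wderBar hf, fderiv_wderBar hf]
  linear_combination (1/4 : ℂ) * e1 - (Complex.I/4) * e2 + (Complex.I/4) * e3 - (Complex.I*Complex.I/4) * e4


lemma diff_coord (l : Fin m) : Differentiable ℝ (fun y : Fin m → ℂ => y l) :=
  (ContinuousLinearMap.proj l : (Fin m → ℂ) →L[ℝ] ℂ).differentiable

lemma fderiv_coord (l : Fin m) (z w : Fin m → ℂ) :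
    fderiv ℝ (fun y : Fin m → ℂ => y l) z w = w l := by
  have h : (fun y : Fin m → ℂ => y l) = (ContinuousLinearMap.proj l : (Fin m → ℂ) →L[ℝ] ℂ) := rfl
  rw [h, ContinuousLinearMap.fderiv]; rfl

def conjCoordCLM (l : Fin m) : (Fin m → ℂ) →L[ℝ] ℂ :=
  (Complex.conjCLE.toContinuousLinearMap).comp (ContinuousLinearMap.proj l)

lemma conjCoord_eq (l : Fin m) :
    (fun y : Fin m → ℂ => (starRingEnd ℂ) (y l)) = conjCoordCLM l := by
  funext y; simp [conjCoordCLM]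

lemma diff_conjCoord (l : Fin m) :
    Differentiable ℝ (fun y : Fin m → ℂ => (starRingEnd ℂ) (y l)) := by
  rw [conjCoord_eq]; exact (conjCoordCLM l).differentiable

lemma contDiff_conjCoord (l : Fin m) :
    ContDiff ℝ (⊤ : ℕ∞) (fun y : Fin m → ℂ => (starRingEnd ℂ) (y l)) := by
  rw [conjCoord_eq]; exact (conjCoordCLM l).contDiff

lemma fderiv_conjCoord (l : Fin m) (z w : Fin m → ℂ) :
    fderiv ℝ (fun y : Fin m → ℂ => (starRingEnd ℂ) (y l)) z w = (starRingEnd ℂ) (w l) := by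
  rw [conjCoord_eq, ContinuousLinearMap.fderiv]; simp [conjCoordCLM]

lemma fderiv_coord_mul {g : (Fin m → ℂ) → ℂ} {z : Fin m → ℂ} (hg : DifferentiableAt ℝ g z)
    (l : Fin m) (w : Fin m → ℂ) :
    fderiv ℝ (fun y => y l * g y) z w = w l * g z + z l * fderiv ℝ g z w := by
  rw [fderiv_fun_mul ((diff_coord l) z) hg]
  simp [fderiv_coord]; ring

lemma fderiv_conjCoord_mul {g : (Fin m → ℂ) → ℂ} {z : Fin m → ℂ} (hg : DifferentiableAt ℝ g z)
    (l : Fin m) (w : Fin m → ℂ) :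
    fderiv ℝ (fun y => (starRingEnd ℂ) (y l) * g y) z w
      = (starRingEnd ℂ) (w l) * g z + (starRingEnd ℂ) (z l) * fderiv ℝ g z w := by
  rw [fderiv_fun_mul ((diff_conjCoord l) z) hg]
  simp [fderiv_conjCoord]; ring

-- wder/wderBar of products with coordinates
lemma wder_coord_mul {g : (Fin m → ℂ) → ℂ} {z : Fin m → ℂ} (hg : DifferentiableAt ℝ g z)
    (j l : Fin m) :
    wder j (fun y => y l * g y) z = (if l = j then 1 else 0) * g z + z l * wder j g z := by
  simp only [wder, fderiv_coord_mul hg, Pi.single_apply]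
  by_cases h : l = j <;> simp [h]
  · linear_combination (-(1/2) * g z) * Complex.I_mul_I
  · ring

lemma wderBar_coord_mul {g : (Fin m → ℂ) → ℂ} {z : Fin m → ℂ} (hg : DifferentiableAt ℝ g z)
    (j l : Fin m) :
    wderBar j (fun y => y l * g y) z = z l * wderBar j g z := by
  simp only [wderBar, fderiv_coord_mul hg, Pi.single_apply]
  by_cases h : l = j <;> simp [h]
  · linear_combination ((1/2) * g z) * Complex.I_mul_I
  · ring

lemma wder_conjCoord_mul {g : (Fin m → ℂ) → ℂ} {z : Fin m → ℂ} (hg : DifferentiableAt ℝ g z)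
    (j l : Fin m) :
    wder j (fun y => (starRingEnd ℂ) (y l) * g y) z
      = (starRingEnd ℂ) (z l) * wder j g z := by
  simp only [wder, fderiv_conjCoord_mul hg, Pi.single_apply, apply_ite, map_one, map_zero,
    Complex.conj_I]
  by_cases h : l = j <;> simp [h]
  · linear_combination ((1/2) * g z) * Complex.I_mul_I
  · ring

lemma wderBar_conjCoord_mul {g : (Fin m → ℂ) → ℂ} {z : Fin m → ℂ} (hg : DifferentiableAt ℝ g z)
    (j l : Fin m) :
    wderBar j (fun y => (starRingEnd ℂ) (y l) * g y) z
      = (if l = j then 1 else 0) * g z + (starRingEnd ℂ) (z l) * wderBar j g z := by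
  simp only [wderBar, fderiv_conjCoord_mul hg, Pi.single_apply, apply_ite, map_one, map_zero,
    Complex.conj_I]
  by_cases h : l = j <;> simp [h]
  · linear_combination (-(1/2) * g z) * Complex.I_mul_I
  · ring

-- linearity
lemma wder_sub {g h : (Fin m → ℂ) → ℂ} {z : Fin m → ℂ} (hg : DifferentiableAt ℝ g z)
    (hh : DifferentiableAt ℝ h z) (j : Fin m) :
    wder j (fun y => g y - h y) z = wder j g z - wder j h z := by
  simp only [wder, fderiv_fun_sub hg hh, ContinuousLinearMap.sub_apply]; ring

lemma wder_add {g h : (Fin m → ℂ) → ℂ} {z : Fin m → ℂ} (hg : DifferentiableAt ℝ g z)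
    (hh : DifferentiableAt ℝ h z) (j : Fin m) :
    wder j (fun y => g y + h y) z = wder j g z + wder j h z := by
  simp only [wder, fderiv_fun_add hg hh, ContinuousLinearMap.add_apply]; ring

lemma wderBar_sub {g h : (Fin m → ℂ) → ℂ} {z : Fin m → ℂ} (hg : DifferentiableAt ℝ g z)
    (hh : DifferentiableAt ℝ h z) (j : Fin m) :
    wderBar j (fun y => g y - h y) z = wderBar j g z - wderBar j h z := by
  simp only [wderBar, fderiv_fun_sub hg hh, ContinuousLinearMap.sub_apply]; ring

lemma wderBar_add {g h : (Fin m → ℂ) → ℂ} {z : Fin m → ℂ} (hg : DifferentiableAt ℝ g z)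
    (hh : DifferentiableAt ℝ h z) (j : Fin m) :
    wderBar j (fun y => g y + h y) z = wderBar j g z + wderBar j h z := by
  simp only [wderBar, fderiv_fun_add hg hh, ContinuousLinearMap.add_apply]; ring

lemma wder_const_mul {g : (Fin m → ℂ) → ℂ} {z : Fin m → ℂ} (hg : DifferentiableAt ℝ g z)
    (c : ℂ) (j : Fin m) :
    wder j (fun y => c * g y) z = c * wder j g z := by
  simp only [wder, fderiv_const_mul hg c, ContinuousLinearMap.smul_apply, smul_eq_mul]; ring

lemma wderBar_const_mul {g : (Fin m → ℂ) → ℂ} {z : Fin m → ℂ} (hg : DifferentiableAt ℝ g z)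
    (c : ℂ) (j : Fin m) :
    wderBar j (fun y => c * g y) z = c * wderBar j g z := by
  simp only [wderBar, fderiv_const_mul hg c, ContinuousLinearMap.smul_apply, smul_eq_mul]; ring

lemma wderBar_sum {ι : Type*} (s : Finset ι) {g : ι → (Fin m → ℂ) → ℂ} {z : Fin m → ℂ}
    (hg : ∀ i ∈ s, DifferentiableAt ℝ (g i) z) (l : Fin m) :
    wderBar l (fun y => ∑ i ∈ s, g i y) z = ∑ i ∈ s, wderBar l (g i) z := by
  simp only [wderBar, fderiv_fun_sum hg, ContinuousLinearMap.sum_apply]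
  rw [Finset.mul_sum, ← Finset.sum_add_distrib, Finset.mul_sum]


lemma contDiff_wder {f : (Fin m → ℂ) → ℂ} (hf : ContDiff ℝ (⊤ : ℕ∞) f) (j : Fin m) :
    ContDiff ℝ (⊤ : ℕ∞) (wder j f) :=
  contDiff_const.mul ((contDiff_Dv hf _).sub (contDiff_const.mul (contDiff_Dv hf _)))

lemma contDiff_wderBar {f : (Fin m → ℂ) → ℂ} (hf : ContDiff ℝ (⊤ : ℕ∞) f) (j : Fin m) :
    ContDiff ℝ (⊤ : ℕ∞) (wderBar j f) :=
  contDiff_const.mul ((contDiff_Dv hf _).add (contDiff_const.mul (contDiff_Dv hf _)))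




lemma contDiff_Aop {f : (Fin m → ℂ) → ℂ} (hf : ContDiff ℝ (⊤ : ℕ∞) f) (lam : ℂ) (j : Fin m) :
    ContDiff ℝ (⊤ : ℕ∞) (Aop lam j f) :=
  (contDiff_wder hf j).sub ((contDiff_const.mul (contDiff_conjCoord j)).mul hf)

lemma comm_key (lam : ℂ) (j l : Fin m) (f : (Fin m → ℂ) → ℂ) (hf : ContDiff ℝ (⊤ : ℕ∞) f)
    (z : Fin m → ℂ) :
    Bop lam l (Aop lam j f) z - Aop lam j (Bop lam l f) z
      = -2 * lam * (if l = j then 1 else 0) * f z := by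
  have hfd : Differentiable ℝ f := hf.differentiable (by simp)
  have hwd : DifferentiableAt ℝ (wder j f) z :=
    ((contDiff_wder hf j).differentiable (by simp)) z
  have hwb : DifferentiableAt ℝ (wderBar l f) z :=
    ((contDiff_wderBar hf l).differentiable (by simp)) z
  have hcf : DifferentiableAt ℝ (fun y => (starRingEnd ℂ) (y j) * f y) z :=
    ((diff_conjCoord j) z).mul (hfd z)
  have hzf : DifferentiableAt ℝ (fun y => y l * f y) z :=
    ((diff_coord l) z).mul (hfd z)
  have hA : Aop lam j f = fun y => wder j f y - lam * ((starRingEnd ℂ) (y j) * f y) := by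
    funext y; simp [Aop, mul_assoc]
  have hB : Bop lam l f = fun y => wderBar l f y + lam * (y l * f y) := by
    funext y; simp [Bop, mul_assoc]
  have e1 : wderBar l (Aop lam j f) z
      = wderBar l (wder j f) z
        - lam * ((if j = l then 1 else 0) * f z + (starRingEnd ℂ) (z j) * wderBar l f z) := by
    rw [hA, wderBar_sub hwd (hcf.const_mul lam) l, wderBar_const_mul hcf lam l,
      wderBar_conjCoord_mul (hfd z) l j]
  have e2 : wder j (Bop lam l f) z
      = wder j (wderBar l f) z
        + lam * ((if l = j then 1 else 0) * f z + z l * wder j f z) := by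
    rw [hB, wder_add hwb (hzf.const_mul lam) j, wder_const_mul hzf lam j,
      wder_coord_mul (hfd z) j l]
  have hiff : (if j = l then (1:ℂ) else 0) = (if l = j then 1 else 0) := by
    simp [eq_comm]
  show wderBar l (Aop lam j f) z + lam * z l * (Aop lam j f) z
      - (wder j (Bop lam l f) z - lam * (starRingEnd ℂ) (z j) * (Bop lam l f) z) = _
  rw [e1, e2, swap_comm hf j l z, hiff]
  show _ + lam * z l * (wder j f z - lam * (starRingEnd ℂ) (z j) * f z)
      - (_ - lam * (starRingEnd ℂ) (z j) * (wderBar l f z + lam * z l * f z)) = _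
  ring


lemma Aop_zero (lam : ℂ) (k : Fin m) (w : Fin m → ℂ) :
    Aop lam k (0 : (Fin m → ℂ) → ℂ) w = 0 := by
  have h0 : (0 : (Fin m → ℂ) → ℂ) = fun _ => (0 : ℂ) := rfl
  simp only [Aop, wder, h0, fderiv_const]
  simp

lemma part2 (lam : ℂ) (f : (Fin m → ℂ) → ℂ) (G : Matrix (Fin m) (Fin m) ℂ)
    (hf : ContDiff ℝ (⊤ : ℕ∞) f) (hB : ∀ l, Bop lam l f = 0) (hG : G.IsSymm) (l : Fin m)
    (z : Fin m → ℂ) :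
    Bop lam l (fun w => ∑ j, ∑ k, G j k * Aop lam j (Aop lam k f) w) z
      = -4 * lam * ∑ k, G l k * Aop lam k f z := by
  have hAf : ∀ k : Fin m, ContDiff ℝ (⊤ : ℕ∞) (Aop lam k f) := fun k => contDiff_Aop hf lam k
  have hAAf : ∀ j k : Fin m, ContDiff ℝ (⊤ : ℕ∞) (Aop lam j (Aop lam k f)) :=
    fun j k => contDiff_Aop (hAf k) lam j
  have hBA : ∀ k : Fin m, Bop lam l (Aop lam k f)
      = fun w => (-2 * lam * (if l = k then 1 else 0)) * f w := by
    intro k; funext w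
    have h := comm_key lam k l f hf w
    rw [hB l, Aop_zero lam k w, sub_zero] at h
    rw [h]
  have hT : ∀ j k : Fin m, Bop lam l (Aop lam j (Aop lam k f)) z
      = -2 * lam * (if l = k then 1 else 0) * Aop lam j f z
        + -2 * lam * (if l = j then 1 else 0) * Aop lam k f z := by
    intro j k
    have h := comm_key lam j l (Aop lam k f) (hAf k) z
    rw [hBA k] at h
    have h2 : Aop lam j (fun w => (-2 * lam * (if l = k then 1 else 0)) * f w) z
        = (-2 * lam * (if l = k then 1 else 0)) * Aop lam j f z := by
      unfold Aop
      rw [wder_const_mul ((hf.differentiable (by simp)) z) _ j]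
      ring
    rw [h2] at h
    linear_combination h
  have hdk : ∀ j k : Fin m, DifferentiableAt ℝ (fun w => G j k * Aop lam j (Aop lam k f) w) z :=
    fun j k => (((hAAf j k).differentiable (by simp)) z).const_mul _
  have hdj : ∀ j : Fin m, DifferentiableAt ℝ (fun w => ∑ k, G j k * Aop lam j (Aop lam k f) w) z :=
    fun j => DifferentiableAt.fun_sum (fun k _ => hdk j k)
  have hsum : Bop lam l (fun w => ∑ j, ∑ k, G j k * Aop lam j (Aop lam k f) w) z
      = ∑ j, ∑ k, G j k * Bop lam l (Aop lam j (Aop lam k f)) z := by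
    have hin : ∀ j : Fin m, wderBar l (fun w => ∑ k, G j k * Aop lam j (Aop lam k f) w) z
        = ∑ k, G j k * wderBar l (Aop lam j (Aop lam k f)) z := by
      intro j
      rw [wderBar_sum Finset.univ (fun k _ => hdk j k) l]
      exact Finset.sum_congr rfl fun k _ =>
        wderBar_const_mul (((hAAf j k).differentiable (by simp)) z) _ l
    unfold Bop
    rw [wderBar_sum Finset.univ (fun j _ => hdj j) l]
    simp_rw [hin]
    rw [Finset.mul_sum, ← Finset.sum_add_distrib]
    refine Finset.sum_congr rfl fun j _ => ?_
    rw [Finset.mul_sum, ← Finset.sum_add_distrib]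
    exact Finset.sum_congr rfl fun k _ => by ring
  rw [hsum]
  simp_rw [hT]
  have hGs : ∀ j : Fin m, G j l = G l j := fun j => hG.apply l j
  have e1 : ∀ j : Fin m,
      (∑ k : Fin m, G j k * (-2 * lam * (if l = k then 1 else 0) * Aop lam j f z))
        = G j l * (-2 * lam * Aop lam j f z) := by
    intro j
    simp [mul_ite, ite_mul, mul_zero, zero_mul, mul_one, Finset.sum_ite_eq]
  have e2 : (∑ j : Fin m, ∑ k : Fin m,
        G j k * (-2 * lam * (if l = j then 1 else 0) * Aop lam k f z))
      = ∑ k : Fin m, G l k * (-2 * lam * Aop lam k f z) := by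
    rw [Finset.sum_comm]
    refine Finset.sum_congr rfl fun k _ => ?_
    simp [mul_ite, ite_mul, mul_zero, zero_mul, mul_one, Finset.sum_ite_eq]
  simp only [mul_add, Finset.sum_add_distrib]
  rw [e2]
  simp_rw [e1, hGs]
  rw [Finset.mul_sum, ← Finset.sum_add_distrib]
  exact Finset.sum_congr rfl fun k _ => by ring

end WH


/-- The commutator `[B_l, A_j] = −2λδ_{lj}`, and the resulting formula for `B_l` applied to
the second-order operator `Σ G_{jk} A_j A_k` on holomorphic sections. -/
theorem statement1 (m : ℕ) (hm : 1 ≤ m) (lam : ℂ) :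
    (∀ (j l : Fin m) (f : (Fin m → ℂ) → ℂ), ContDiff ℝ (⊤ : ℕ∞) f →
      ∀ z, Bop lam l (Aop lam j f) z - Aop lam j (Bop lam l f) z
        = -2 * lam * (if l = j then 1 else 0) * f z) ∧
    (∀ (f : (Fin m → ℂ) → ℂ) (G : Matrix (Fin m) (Fin m) ℂ), ContDiff ℝ (⊤ : ℕ∞) f →
      (∀ l, Bop lam l f = 0) → G.IsSymm →
      ∀ l z, Bop lam l (fun w => ∑ j, ∑ k, G j k * Aop lam j (Aop lam k f) w) z
        = -4 * lam * ∑ k, G l k * Aop lam k f z) := by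
  exact ⟨fun j l f hf z => WH.comm_key lam j l f hf z,
    fun f G hf hB hG l z => WH.part2 lam f G hf hB hG l z⟩
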